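/- arXiv:1403.0461 — 2 statements merged into one kernel-verified Lean document; each statement's English description precedes it below -/
import Mathlib

section
/- In a c-semiring where × is idempotent, a × b is the greatest lower bound of {a, b} with respect to the order a ≤ b iff a + b = b. -/
structure CSemiring (A : Type*) where
  add : A → A → A
  mul : A → A → A
  zero : A
  one : A
  add_comm : ∀ a b, add a b = add b a
  add_assoc : ∀ a b c, add (add a b) c = add a (add b c)
  add_idem : ∀ a, add a a = a
  add_zero : ∀ a, add a zero = a
  add_one : ∀ a, add a one = one
  mul_comm : ∀ a b, mul a b = mul b a
  mul_assoc : ∀ a b c, mul (mul a b) c = mul a (mul b c)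
  mul_one : ∀ a, mul a one = a
  mul_zero : ∀ a, mul a zero = zero
  left_distrib : ∀ a b c, mul a (add b c) = add (mul a b) (mul a c)

/-- The induced order: `a ≤ b` iff `a + b = b`. -/
def CSemiring.le {A : Type*} (S : CSemiring A) (a b : A) : Prop := S.add a b = b

namespace CSemiring

variable {A : Type*} (S : CSemiring A)

theorem right_distrib (a b c : A) : S.mul (S.add a b) c = S.add (S.mul a c) (S.mul b c) := by
  rw [S.mul_comm, S.left_distrib, S.mul_comm c a, S.mul_comm c b]

theorem add_mul_self (x y : A) : S.add x (S.mul x y) = x :=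
  calc S.add x (S.mul x y) = S.add (S.mul x S.one) (S.mul x y) := by rw [S.mul_one]
    _ = S.mul x (S.add y S.one) := by rw [← S.left_distrib, S.add_comm S.one]
    _ = x := by rw [S.add_one, S.mul_one]

theorem mul_le_left (x y : A) : S.le (S.mul x y) x := by
  rw [CSemiring.le, S.add_comm]
  exact S.add_mul_self x y

theorem mul_le_right (x y : A) : S.le (S.mul x y) y := by
  rw [S.mul_comm]
  exact S.mul_le_left y x

theorem mul_eq_left_of_le (hmul_idem : ∀ a : A, S.mul a a = a) {c x : A} (hcx : S.le c x) :
    S.mul c x = c :=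
  calc S.mul c x = S.mul c (S.add c x) := by rw [hcx]
    _ = S.add c (S.mul c x) := by rw [S.left_distrib, hmul_idem]
    _ = c := S.add_mul_self c x

theorem le_mul (hmul_idem : ∀ a : A, S.mul a a = a) {a b c : A} (hca : S.le c a)
    (hcb : S.le c b) : S.le c (S.mul a b) :=
  calc S.add c (S.mul a b) = S.add (S.mul c b) (S.mul a b) := by
        rw [S.mul_eq_left_of_le hmul_idem hcb]
    _ = S.mul (S.add c a) b := (S.right_distrib c a b).symm
    _ = S.mul a b := by rw [hca]

end CSemiring

/-- In a c-semiring with idempotent `×`, `a × b` is the greatest lower bound of `{a, b}`. -/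
theorem csemiring_mul_glb {A : Type*} (S : CSemiring A)
    (hmul_idem : ∀ a : A, S.mul a a = a) (a b : A) :
    S.le (S.mul a b) a ∧ S.le (S.mul a b) b ∧
      ∀ c : A, S.le c a → S.le c b → S.le c (S.mul a b) :=
  ⟨S.mul_le_left a b, S.mul_le_right a b, fun _ hca hcb => S.le_mul hmul_idem hca hcb⟩
end

section
/- For distinct variables x, y, z with x ≠ y, x ≠ z, and y ≠ z, the cylindric identity d_{xy} = ∃_z (d_{xz} ⊗ d_{zy}) holds for diagonal soft constraints over a finite nonempty domain, assuming × is such that 1 × 1 = 1 and a × 0 = 0. -/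
def SoftConstraint (V D A : Type*) := (V → D) → A

def cle {V D A : Type*} (S : CSemiring A) (c₁ c₂ : SoftConstraint V D A) : Prop :=
  ∀ η : V → D, S.le (c₁ η) (c₂ η)

/-- The hiding operator: `(∃ₓ c) η = Σ_{d ∈ D} c (η[x := d])`. -/
noncomputable def hide {V D A : Type*} [DecidableEq V] [Fintype D] (S : CSemiring A) (x : V)
    (c : SoftConstraint V D A) : SoftConstraint V D A :=
  fun η =>
    ((Finset.univ : Finset D).toList.map (fun d => c (Function.update η x d))).foldr
      S.add S.zero

def comb {V D A : Type*} (S : CSemiring A) (c₁ c₂ : SoftConstraint V D A) :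
    SoftConstraint V D A := fun η => S.mul (c₁ η) (c₂ η)

def diag {V D A : Type*} [DecidableEq D] (S : CSemiring A) (x y : V) :
    SoftConstraint V D A := fun η => if η x = η y then S.one else S.zero

namespace CSemiring

variable {A : Type*} (S : CSemiring A)

theorem zero_add (a : A) : S.add S.zero a = a := by
  rw [S.add_comm, S.add_zero]

/-- Idempotence of `+` is what makes repetitions of `a` in `l` harmless. -/
theorem foldr_map_add_eq_of_forall_ne {D : Type*} [DecidableEq D] (l : List D) (f : D → A)
    (a : D) (hf : ∀ d ∈ l, d ≠ a → f d = S.zero) :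
    (l.map f).foldr S.add S.zero = if a ∈ l then f a else S.zero := by
  induction l with
  | nil => simp
  | cons b l ih =>
    rw [List.map_cons, List.foldr_cons, ih fun d hd => hf d (List.mem_cons_of_mem _ hd)]
    by_cases hba : b = a
    · subst hba
      split_ifs <;> simp_all [S.add_idem, S.add_zero]
    · rw [hf b List.mem_cons_self hba, S.zero_add]
      simp [List.mem_cons, Ne.symm hba]

end CSemiring

theorem hide_eq_of_forall_ne {V D A : Type*} [DecidableEq V] [Fintype D] (S : CSemiring A)
    (z : V) (c : SoftConstraint V D A) (η : V → D) (a : D)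
    (hc : ∀ d ≠ a, c (Function.update η z d) = S.zero) :
    hide S z c η = c (Function.update η z a) := by
  classical
  rw [hide, S.foldr_map_add_eq_of_forall_ne _ _ a fun d _ hd => hc d hd]
  simp

theorem comb_diag_diag_update {V D A : Type*} [DecidableEq V] [DecidableEq D]
    (S : CSemiring A) {x y z : V} (hxz : x ≠ z) (hyz : y ≠ z) (η : V → D) (d : D) :
    comb S (diag S x z) (diag S z y) (Function.update η z d) =
      if η x = d then diag S x y η else S.zero := by
  simp only [comb, diag, Function.update_of_ne hxz, Function.update_of_ne hyz,
    Function.update_self]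
  split_ifs <;> simp_all [S.mul_one, S.mul_zero]

theorem diag_cylindric_general {V D A : Type*} [DecidableEq V] [DecidableEq D] [Fintype D]
    (S : CSemiring A) (x y z : V)
    (hxz : x ≠ z) (hyz : y ≠ z) :
    (diag S x y : SoftConstraint V D A) = hide S z (comb S (diag S x z) (diag S z y)) := by
  funext η
  have hcomb := comb_diag_diag_update S hxz hyz η
  rw [hide_eq_of_forall_ne S z _ η (η x) fun d hd => by rw [hcomb, if_neg (Ne.symm hd)],
    hcomb, if_pos rfl]

/-- The cylindric identity `d_{xy} = ∃_z (d_{xz} ⊗ d_{zy})` for pairwise distinct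
variables over a finite nonempty domain. -/
theorem diag_cylindric {V D A : Type*} [DecidableEq V] [DecidableEq D] [Fintype D]
    [Nonempty D] (S : CSemiring A) (x y z : V)
    (hxy : x ≠ y) (hxz : x ≠ z) (hyz : y ≠ z) :
    (diag S x y : SoftConstraint V D A) = hide S z (comb S (diag S x z) (diag S z y)) :=
  diag_cylindric_general S x y z hxz hyz
end
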